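/- Soundness of existential reduction for cubes: let Π.ψ be a PCNF and C ∪ {l} a non-contradictory cube that is an implicant of ψ extended validly (i.e., Π.ψ is satisfiability-equivalent to Π.(ψ ∨ (C ∪ {l}))), where l is existential in Π and every universal literal l' of C satisfies l' <_Π l. Then Π.ψ is satisfiability-equivalent to Π.(ψ ∨ C). -/

import Mathlib

/-- Variables are natural numbers. -/
abbrev Var := ℕ

/-- A literal is a variable together with a polarity. -/
abbrev Lit := Var × Bool

/-- Negation of a literal. -/
def Lit.negate (l : Lit) : Lit := (l.1, !l.2)

/-- A clause is a finite set of literals (interpreted disjunctively). -/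
abbrev Clause := Finset Lit

/-- A cube is a finite set of literals (interpreted conjunctively). -/
abbrev Cube := Finset Lit

/-- A CNF is a finite set of clauses. -/
abbrev Cnf := Finset Clause

/-- An assignment is a finite set of literals. -/
abbrev Assignment := Finset Lit

/-- An assignment contains no complementary pair of literals. -/
def Assignment.consistent (A : Assignment) : Prop := ∀ l ∈ A, Lit.negate l ∉ A

/-- A total assignment satisfies a literal. -/
def litSat (σ : Var → Bool) (l : Lit) : Prop := σ l.1 = l.2

/-- A total assignment satisfies a clause. -/
def clauseSat (σ : Var → Bool) (C : Clause) : Prop := ∃ l ∈ C, litSat σ l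

/-- A total assignment satisfies a CNF (is a propositional model). -/
def cnfSat (σ : Var → Bool) (ψ : Cnf) : Prop := ∀ C ∈ ψ, clauseSat σ C

/-- A total assignment satisfies a cube. -/
def cubeSat (σ : Var → Bool) (D : Cube) : Prop := ∀ l ∈ D, litSat σ l

/-- Restriction of a clause by an assignment: delete falsified literals. -/
def Clause.restrict (C : Clause) (A : Assignment) : Clause :=
  C.filter (fun l => Lit.negate l ∉ A)

/-- Restriction ψ[A] of a CNF by an assignment: remove satisfied clauses and
delete falsified literals from the remaining clauses. -/
def Cnf.restrict (ψ : Cnf) (A : Assignment) : Cnf :=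
  (ψ.filter (fun C => ∀ l ∈ A, l ∉ C)).image (fun C => Clause.restrict C A)

/-- Quantifiers. -/
inductive Quant | ex | all
deriving DecidableEq

/-- A quantifier prefix: a list of quantified variables (outermost first). -/
abbrev QPrefix := List (Quant × Var)

/-- Restriction of a prefix by an assignment: remove assigned variables. -/
def QPrefix.restrict (pre : QPrefix) (A : Assignment) : QPrefix :=
  pre.filter (fun q => q.2 ∉ A.image Prod.fst)

/-- Satisfiability of the PCNF `pre.ψ`, defined recursively over the prefix:
an existential variable needs one satisfiable branch, a universal variable
both; a quantifier-free CNF is satisfiable iff it is propositionally true. -/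
def qbfSat : QPrefix → Cnf → Prop
  | [], ψ => ∃ σ : Var → Bool, cnfSat σ ψ
  | (Quant.ex, x) :: pre, ψ =>
      qbfSat pre (Cnf.restrict ψ {(x, true)}) ∨ qbfSat pre (Cnf.restrict ψ {(x, false)})
  | (Quant.all, x) :: pre, ψ =>
      qbfSat pre (Cnf.restrict ψ {(x, true)}) ∧ qbfSat pre (Cnf.restrict ψ {(x, false)})

/-- Restriction of a set of cubes (disjunctively added to the matrix) by an
assignment: remove falsified cubes and delete satisfied literals. -/
def Cube.restrictSet (Ds : Finset Cube) (A : Assignment) : Finset Cube :=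
  (Ds.filter (fun D => ∀ l ∈ D, Lit.negate l ∉ A)).image (fun D => D.filter (fun l => l ∉ A))

/-- Satisfiability of the QBF `pre.(ψ ∨ D₁ ∨ … ∨ Dₙ)` whose matrix is a CNF
together with disjunctively added cubes. -/
def qbfSatCubes : QPrefix → Cnf → Finset Cube → Prop
  | [], ψ, Ds => ∃ σ : Var → Bool, cnfSat σ ψ ∨ ∃ D ∈ Ds, cubeSat σ D
  | (Quant.ex, x) :: pre, ψ, Ds =>
      qbfSatCubes pre (Cnf.restrict ψ {(x, true)}) (Cube.restrictSet Ds {(x, true)}) ∨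
      qbfSatCubes pre (Cnf.restrict ψ {(x, false)}) (Cube.restrictSet Ds {(x, false)})
  | (Quant.all, x) :: pre, ψ, Ds =>
      qbfSatCubes pre (Cnf.restrict ψ {(x, true)}) (Cube.restrictSet Ds {(x, true)}) ∧
      qbfSatCubes pre (Cnf.restrict ψ {(x, false)}) (Cube.restrictSet Ds {(x, false)})

/-- `x` is quantified before (outer to) `y` in the prefix. -/
def before (pre : QPrefix) (x y : Var) : Prop :=
  ∃ i j : Fin pre.length, (i : ℕ) < (j : ℕ) ∧ (pre.get i).2 = x ∧ (pre.get j).2 = y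

/-!
Adding any cubes to the matrix only makes a PCNF easier to satisfy, so one direction is free;
for the other it suffices to show that `Π.(ψ ∨ C)` implies `Π.(ψ ∨ (C ∪ {l}))`. Walk down
the quantifier tree. Before `l`'s variable is reached, both cubes are restricted in the same way
(a falsified `C` kills both cubes, otherwise the same literal is deleted from both). At `l`'s
existential variable, choose the branch that makes `l` true: it turns `C ∪ {l}` into `C ∖ {l}`,
and since every universal variable of `C` has already been assigned, the remaining literals of
this consistent cube are all existential or free and can be made true in every branch.
-/

lemma Cube.restrictSet_singleton_lit (D : Cube) (x : Var) (b : Bool) :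
    Cube.restrictSet {D} {(x, b)} = if (x, !b) ∈ D then ∅ else {D.erase (x, b)} := by
  have hfalsified : (∀ m ∈ D, Lit.negate m ∉ ({(x, b)} : Assignment)) ↔ (x, !b) ∉ D := by
    constructor
    · intro h hD
      exact h _ hD (by simp [Lit.negate])
    · rintro h ⟨y, c⟩ hm hneg
      obtain ⟨rfl, rfl⟩ : y = x ∧ c = !b := by simpa [Lit.negate] using hneg
      exact h hm
  unfold Cube.restrictSet
  rw [Finset.filter_singleton]
  by_cases hD : (x, !b) ∈ D
  · rw [if_neg (by rwa [hfalsified, not_not]), if_pos hD, Finset.image_empty]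
  · rw [if_pos (hfalsified.2 hD), if_neg hD, Finset.image_singleton]
    simp only [Finset.mem_singleton, Finset.filter_ne']

lemma Assignment.consistent.mono {A B : Assignment} (hA : A.consistent) (hBA : B ⊆ A) :
    B.consistent :=
  fun m hm hneg => hA m (hBA hm) (hBA hneg)

lemma before.right_mem {pre : QPrefix} {a b : Var} (h : before pre a b) :
    b ∈ pre.map Prod.snd := by
  obtain ⟨-, j, -, -, rfl⟩ := h
  exact List.mem_map_of_mem (List.get_mem pre j)

lemma before_cons {p : Quant × Var} {pre : QPrefix} {a b : Var} :
    before (p :: pre) a b ↔ (p.2 = a ∧ b ∈ pre.map Prod.snd) ∨ before pre a b := by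
  constructor
  · rintro ⟨i, j, hij, hi, hj⟩
    induction j using Fin.cases with
    | zero => simp at hij
    | succ j =>
      induction i using Fin.cases with
      | zero => exact Or.inl ⟨hi, hj ▸ List.mem_map_of_mem (List.get_mem pre j)⟩
      | succ i => exact Or.inr ⟨i, j, by simpa using hij, hi, hj⟩
  · rintro (⟨rfl, hb⟩ | ⟨i, j, hij, rfl, rfl⟩)
    · obtain ⟨y, hy, rfl⟩ := List.mem_map.mp hb
      obtain ⟨j, rfl⟩ := List.get_of_mem hy
      exact ⟨0, j.succ, by simp, rfl, rfl⟩
    · exact ⟨i.succ, j.succ, by simpa using hij, rfl, rfl⟩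

lemma qbfSatCubes_of_qbfSat (pre : QPrefix) (ψ : Cnf) (Ds : Finset Cube)
    (h : qbfSat pre ψ) : qbfSatCubes pre ψ Ds := by
  induction pre generalizing ψ Ds with
  | nil =>
    obtain ⟨σ, hσ⟩ := h
    exact ⟨σ, Or.inl hσ⟩
  | cons p pre ih =>
    obtain ⟨_ | _, x⟩ := p
    · exact h.imp (ih _ _) (ih _ _)
    · exact h.imp (ih _ _) (ih _ _)

lemma qbfSatCubes_cons_ex {pre : QPrefix} {ψ : Cnf} {Ds : Finset Cube} {x : Var} (b : Bool)
    (h : qbfSatCubes pre (Cnf.restrict ψ {(x, b)}) (Cube.restrictSet Ds {(x, b)})) :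
    qbfSatCubes ((Quant.ex, x) :: pre) ψ Ds := by
  cases b
  · exact Or.inr h
  · exact Or.inl h

lemma qbfSatCubes_singleton_of_consistent (pre : QPrefix) (ψ : Cnf) (D : Cube)
    (hD : Assignment.consistent D) (hall : ∀ m ∈ D, (Quant.all, m.1) ∉ pre) :
    qbfSatCubes pre ψ {D} := by
  induction pre generalizing ψ D with
  | nil =>
    refine ⟨fun v => decide ((v, true) ∈ D), Or.inr ⟨D, Finset.mem_singleton_self D, ?_⟩⟩
    rintro ⟨x, _ | _⟩ hm
    · simpa [litSat, Lit.negate] using hD _ hm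
    · simpa [litSat] using hm
  | cons p pre ih =>
    have hall_tail : ∀ m ∈ D, (Quant.all, m.1) ∉ pre :=
      fun m hm hpre => hall m hm (List.mem_cons_of_mem _ hpre)
    obtain ⟨_ | _, x⟩ := p
    · obtain ⟨b, hnot⟩ : ∃ b, (x, !b) ∉ D := by
        by_cases hxt : (x, true) ∈ D
        · exact ⟨true, by simpa [Lit.negate] using hD _ hxt⟩
        · exact ⟨false, hxt⟩
      apply qbfSatCubes_cons_ex b
      rw [Cube.restrictSet_singleton_lit, if_neg hnot]
      exact ih _ _ (hD.mono (Finset.erase_subset _ _))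
        (fun m hm => hall_tail m (Finset.mem_of_mem_erase hm))
    · have hfree : ∀ b, (x, b) ∉ D := fun b hxb => hall _ hxb List.mem_cons_self
      constructor <;>
      · rw [Cube.restrictSet_singleton_lit, if_neg (hfree _), Finset.erase_eq_of_notMem (hfree _)]
        exact ih _ _ hD hall_tail

lemma Cube.restrictSet_singleton_insert (C : Cube) {l : Lit} {x : Var} (b : Bool)
    (hxl : x ≠ l.1) :
    Cube.restrictSet {insert l C} {(x, b)} =
      if (x, !b) ∈ C then ∅ else {insert l (C.erase (x, b))} := by
  have hl : (x, !b) ≠ l := fun h => hxl (congrArg Prod.fst h)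
  have hxb : l ≠ (x, b) := fun h => hxl (congrArg Prod.fst h).symm
  simp only [Cube.restrictSet_singleton_lit, Finset.mem_insert, hl, false_or,
    Finset.erase_insert_of_ne hxb]

lemma qbfSatCubes_cons_ex_insert (pre : QPrefix) (ψ : Cnf) (C : Cube) (l : Lit)
    (hcons : Assignment.consistent (insert l C)) (hall : ∀ m ∈ C, (Quant.all, m.1) ∉ pre) :
    qbfSatCubes ((Quant.ex, l.1) :: pre) ψ {insert l C} := by
  have hnot : (l.1, !l.2) ∉ insert l C := hcons l (Finset.mem_insert_self l C)
  apply qbfSatCubes_cons_ex l.2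
  rw [Cube.restrictSet_singleton_lit, if_neg hnot, Prod.mk.eta, Finset.erase_insert_eq_erase]
  exact qbfSatCubes_singleton_of_consistent _ _ _
    (hcons.mono ((Finset.erase_subset _ _).trans (Finset.subset_insert _ _)))
    (fun m hm => hall m (Finset.mem_of_mem_erase hm))

lemma qbfSatCubes_insert_of_qbfSatCubes (pre : QPrefix) (ψ : Cnf) (C : Cube) (l : Lit)
    (hnodup : (pre.map Prod.snd).Nodup) (hcons : Assignment.consistent (insert l C))
    (hex : (Quant.ex, l.1) ∈ pre)
    (horder : ∀ m ∈ C, (Quant.all, m.1) ∈ pre → before pre m.1 l.1)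
    (h : qbfSatCubes pre ψ {C}) : qbfSatCubes pre ψ {insert l C} := by
  induction pre generalizing ψ C with
  | nil => simp at hex
  | cons p pre ih =>
    obtain ⟨q, x⟩ := p
    obtain ⟨hx, hnodup⟩ := List.nodup_cons.mp hnodup
    have hx_all : ∀ m ∈ C, (Quant.all, m.1) ∈ pre → x ≠ m.1 := by
      rintro m - hall rfl
      exact hx (List.mem_map.2 ⟨_, hall, rfl⟩)
    have horder_tail : ∀ m ∈ C, (Quant.all, m.1) ∈ pre → before pre m.1 l.1 := by
      intro m hm hall
      exact (before_cons.1 (horder m hm (List.mem_cons_of_mem _ hall))).resolve_left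
        (fun h => hx_all m hm hall h.1)
    by_cases hxl : x = l.1
    · subst hxl
      obtain rfl : q = Quant.ex := by
        rcases List.mem_cons.mp hex with hhead | htail
        · exact (Prod.ext_iff.mp hhead).1.symm
        · exact absurd (List.mem_map_of_mem htail) hx
      exact qbfSatCubes_cons_ex_insert pre ψ C l hcons
        (fun m hm hall => hx (horder_tail m hm hall).right_mem)
    · have hex : (Quant.ex, l.1) ∈ pre := by
        rcases List.mem_cons.mp hex with hhead | htail
        · exact absurd (Prod.ext_iff.mp hhead).2.symm hxl
        · exact htail
      have hbranch : ∀ b,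
          qbfSatCubes pre (Cnf.restrict ψ {(x, b)}) (Cube.restrictSet {C} {(x, b)}) →
          qbfSatCubes pre (Cnf.restrict ψ {(x, b)}) (Cube.restrictSet {insert l C} {(x, b)}) := by
        intro b hC
        rw [Cube.restrictSet_singleton_lit] at hC
        rw [Cube.restrictSet_singleton_insert C b hxl]
        split_ifs at hC ⊢
        · exact hC
        · exact ih _ _ hnodup
            (hcons.mono (Finset.insert_subset_insert _ (Finset.erase_subset _ _))) hex
            (fun m hm => horder_tail m (Finset.mem_of_mem_erase hm)) hC
      cases q
      · exact h.imp (hbranch true) (hbranch false)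
      · exact h.imp (hbranch true) (hbranch false)

theorem existential_reduction_sound_general
    (pre : QPrefix) (ψ : Cnf) (C : Cube) (l : Lit)
    (hnodup : (pre.map Prod.snd).Nodup)
    (hnoncontra : ∀ m ∈ insert l C, Lit.negate m ∉ insert l C)
    (hex : (Quant.ex, l.1) ∈ pre)
    (horder : ∀ m ∈ C, (Quant.all, m.1) ∈ pre → before pre m.1 l.1)
    (hvalid : qbfSat pre ψ ↔ qbfSatCubes pre ψ {insert l C}) :
    qbfSat pre ψ ↔ qbfSatCubes pre ψ {C} :=
  ⟨qbfSatCubes_of_qbfSat pre ψ {C}, fun h => hvalid.2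
    (qbfSatCubes_insert_of_qbfSatCubes pre ψ C l hnodup hnoncontra hex horder h)⟩

/-- Soundness of existential reduction for cubes: if disjunctively adding the
non-contradictory cube `C ∪ {l}` to the matrix preserves satisfiability,
where `l` is existential and quantified after all universal literals of `C`,
then disjunctively adding the reduced cube `C` also preserves
satisfiability. -/
theorem existential_reduction_sound
    (pre : QPrefix) (ψ : Cnf) (C : Cube) (l : Lit)
    (hnodup : (pre.map Prod.snd).Nodup)
    (hl : l ∉ C)
    (hnoncontra : ∀ m ∈ insert l C, Lit.negate m ∉ insert l C)
    (hex : (Quant.ex, l.1) ∈ pre)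
    (hvars : ∀ m ∈ C, ∃ q, (q, m.1) ∈ pre)
    (horder : ∀ m ∈ C, (Quant.all, m.1) ∈ pre → before pre m.1 l.1)
    (hvalid : qbfSat pre ψ ↔ qbfSatCubes pre ψ {insert l C}) :
    qbfSat pre ψ ↔ qbfSatCubes pre ψ {C} :=
  existential_reduction_sound_general pre ψ C l hnodup hnoncontra hex horder hvalid
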